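/- Let $\Phi = \mathcal{N}(\mu, \sigma^2 I_d)$ be a Gaussian measure on $\mathbb{R}^d$ and let $Q$ be a probability measure absolutely continuous with respect to $\Phi$ with density $dQ/d\Phi(x) = h(x)/Z$, where $h: \mathbb{R}^d \to (0,1]$ is measurable and $Z = \int h \, d\Phi$. Then the means satisfy $\|\mathbb{E}_{Q}[X] - \mu\|_2^2 \le 2\sigma^2 \log(1/Z)$. -/

import Mathlib

open MeasureTheory ProbabilityTheory Real
open scoped NNReal ENNReal

theorem aux_integrable_pi_prod {n : ℕ} (μ : Fin n → Measure ℝ) [∀ i, SigmaFinite (μ i)]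
    {f : Fin n → ℝ → ℝ} (hf : ∀ i, Integrable (f i) (μ i)) :
    Integrable (fun x : Fin n → ℝ => ∏ i, f i (x i)) (Measure.pi μ) := by
  induction n with
  | zero =>
      simp only [Finset.univ_eq_empty, Finset.prod_empty]
      rw [integrable_const_iff]
      simp [Measure.pi_empty_univ]
      constructor; simp [Measure.pi_empty_univ]
  | succ n ih =>
      have hmp := (measurePreserving_piFinSuccAbove μ 0).symm
      rw [← hmp.integrable_comp_emb (MeasurableEquiv.measurableEmbedding _)]
      simp_rw [MeasurableEquiv.piFinSuccAbove_symm_apply, Fin.insertNthEquiv,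
        Fin.prod_univ_succ, Fin.insertNth_zero]
      simp only [Fin.zero_succAbove, Function.comp_def, Equiv.coe_fn_mk,
        Fin.cons_zero, Fin.cons_succ]
      exact Integrable.mul_prod (hf 0) (ih _ fun i => hf _)

theorem aux_integral_pi_prod {n : ℕ} (μ : Fin n → Measure ℝ) [∀ i, SigmaFinite (μ i)]
    (f : Fin n → ℝ → ℝ) :
    ∫ x : Fin n → ℝ, ∏ i, f i (x i) ∂(Measure.pi μ) = ∏ i, ∫ x, f i x ∂(μ i) := by
  induction n with
  | zero => simp [Measure.pi_empty_univ, Measure.real]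
  | succ n ih =>
      calc
        _ = ∫ x : ℝ × (Fin n → ℝ), f 0 x.1 * ∏ i : Fin n, f (Fin.succ i) (x.2 i)
              ∂((μ 0).prod (Measure.pi fun i => μ (Fin.succ i))) := by
          rw [← ((measurePreserving_piFinSuccAbove μ 0).symm).integral_comp']
          simp_rw [MeasurableEquiv.piFinSuccAbove_symm_apply, Fin.insertNthEquiv,
            Fin.prod_univ_succ, Fin.insertNth_zero, Equiv.coe_fn_mk, Fin.cons_succ,
            Fin.zero_succAbove, Fin.cons_zero, cast_eq]
        _ = (∫ x, f 0 x ∂(μ 0)) * ∏ i : Fin n, ∫ x, f (Fin.succ i) x ∂(μ (Fin.succ i)) := by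
          rw [← ih, ← integral_prod_mul]
        _ = ∏ i, ∫ x, f i x ∂(μ i) := by rw [Fin.prod_univ_succ]

lemma aux_gauss_key (mu : ℝ) (v : ℝ≥0) (hv : v ≠ 0) (t : ℝ) (x : ℝ) :
    gaussianPDFReal mu v x * rexp (t * (x - mu))
      = rexp ((v : ℝ) * t ^ 2 / 2) * gaussianPDFReal (mu + v * t) v x := by
  have hv' : (0:ℝ) < (v:ℝ) := by positivity
  simp only [gaussianPDFReal]
  rw [mul_assoc, ← exp_add, mul_left_comm, ← exp_add]
  congr 1
  field_simp
  ring

lemma aux_gauss_withDensity (mu : ℝ) (v : ℝ≥0) (hv : v ≠ 0) :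
    gaussianReal mu v
      = volume.withDensity (fun x => ((gaussianPDFReal mu v x).toNNReal : ℝ≥0∞)) := by
  rw [gaussianReal_of_var_ne_zero mu hv]
  rfl

lemma aux_smul_eq (mu : ℝ) (v : ℝ≥0) (hv : v ≠ 0) (t : ℝ) :
    (fun x => (gaussianPDFReal mu v x).toNNReal • rexp (t * (x - mu)))
      = fun x => rexp ((v : ℝ) * t ^ 2 / 2) * gaussianPDFReal (mu + v * t) v x := by
  ext x
  rw [NNReal.smul_def, smul_eq_mul, Real.coe_toNNReal _ (gaussianPDFReal_nonneg mu v x),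
    aux_gauss_key mu v hv t x]

lemma aux_gauss_integrable_exp (mu : ℝ) (v : ℝ≥0) (hv : v ≠ 0) (t : ℝ) :
    Integrable (fun x => rexp (t * (x - mu))) (gaussianReal mu v) := by
  rw [aux_gauss_withDensity mu v hv,
    integrable_withDensity_iff_integrable_smul ((measurable_gaussianPDFReal mu v).real_toNNReal)]
  rw [aux_smul_eq mu v hv t]
  exact (integrable_gaussianPDFReal _ _).const_mul _

lemma aux_gauss_integral_exp (mu : ℝ) (v : ℝ≥0) (hv : v ≠ 0) (t : ℝ) :
    ∫ x, rexp (t * (x - mu)) ∂(gaussianReal mu v) = rexp ((v : ℝ) * t ^ 2 / 2) := by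
  rw [aux_gauss_withDensity mu v hv,
    integral_withDensity_eq_integral_smul ((measurable_gaussianPDFReal mu v).real_toNNReal)]
  rw [aux_smul_eq mu v hv t]
  rw [integral_const_mul, integral_gaussianPDFReal_eq_one _ hv, mul_one]

lemma aux_gauss_integrable_id (mu : ℝ) (v : ℝ≥0) (hv : v ≠ 0) :
    Integrable (fun x => x) (gaussianReal mu v) := by
  have h1 := aux_gauss_integrable_exp mu v hv 1
  have h2 := aux_gauss_integrable_exp mu v hv (-1)
  refine (((h1.add h2).add (integrable_const |mu|)).mono'
    measurable_id.aestronglyMeasurable (ae_of_all _ fun x => ?_))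
  have e1 : x - mu ≤ rexp (1 * (x - mu)) := by
    rw [one_mul]; linarith [Real.add_one_le_exp (x - mu)]
  have e2 : -(x - mu) ≤ rexp ((-1) * (x - mu)) := by
    rw [neg_one_mul]; linarith [Real.add_one_le_exp (-(x - mu))]
  have p1 : (0:ℝ) < rexp (1 * (x - mu)) := Real.exp_pos _
  have p2 : (0:ℝ) < rexp ((-1) * (x - mu)) := Real.exp_pos _
  rw [Real.norm_eq_abs]
  simp only [Pi.add_apply]
  rcases abs_cases x with ⟨hx, _⟩ | ⟨hx, _⟩ <;> rcases abs_cases mu with ⟨hm, _⟩ | ⟨hm, _⟩ <;>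
    rw [hx] <;> linarith

theorem stmt_8 (d : ℕ) (m : Fin d → ℝ) (σ : ℝ≥0) (hσ : 0 < σ)
    (h : (Fin d → ℝ) → ℝ) (hh : Measurable h) (hh01 : ∀ x, h x ∈ Set.Ioc (0 : ℝ) 1)
    (Z : ℝ)
    (hZdef : Z = ∫ x, h x ∂(Measure.pi fun k => gaussianReal (m k) (σ ^ 2)))
    (hZ : 0 < Z) :
    ∑ k, ((∫ x, x k ∂((Measure.pi fun k => gaussianReal (m k) (σ ^ 2)).withDensity
        (fun x => ENNReal.ofReal (h x / Z)))) - m k) ^ 2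
      ≤ 2 * (σ : ℝ) ^ 2 * Real.log (1 / Z) := by
  have hv : (σ ^ 2 : ℝ≥0) ≠ 0 := pow_ne_zero 2 hσ.ne'
  set Φ : Measure (Fin d → ℝ) := Measure.pi fun k => gaussianReal (m k) (σ ^ 2) with hΦ
  set Q : Measure (Fin d → ℝ) := Φ.withDensity (fun x => ENNReal.ofReal (h x / Z)) with hQdef
  haveI : IsProbabilityMeasure Φ := by rw [hΦ]; infer_instance
  have hρ_pos : ∀ x, 0 < h x / Z := fun x => div_pos (hh01 x).1 hZ
  have hρ_le : ∀ x, h x / Z ≤ 1 / Z := fun x => by gcongr; exact (hh01 x).2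
  -- conversion of Q-integrals to Φ-integrals
  have hQint : ∀ g : (Fin d → ℝ) → ℝ,
      ∫ x, g x ∂Q = ∫ x, (h x / Z) * g x ∂Φ := by
    intro g
    rw [hQdef,
      show (fun x => ENNReal.ofReal (h x / Z))
          = fun x => (((h x / Z).toNNReal : ℝ≥0) : ℝ≥0∞) from rfl,
      integral_withDensity_eq_integral_smul ((hh.div_const Z).real_toNNReal) g]
    congr 1; ext x
    rw [NNReal.smul_def, smul_eq_mul, Real.coe_toNNReal _ (hρ_pos x).le]
  have hint_h : Integrable h Φ := by
    refine (integrable_const (1:ℝ)).mono' hh.aestronglyMeasurable (ae_of_all _ fun x => ?_)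
    rw [Real.norm_eq_abs, abs_of_pos (hh01 x).1]; exact (hh01 x).2
  have hint_ρ : Integrable (fun x => h x / Z) Φ := hint_h.div_const Z
  have hρ_integral : ∫ x, h x / Z ∂Φ = 1 := by
    rw [integral_div, ← hZdef, div_self hZ.ne']
  -- coordinate integrability
  have hint_abs : ∀ k, Integrable (fun x : Fin d → ℝ => |x k|) Φ := by
    intro k
    have hprod : ∀ x : Fin d → ℝ,
        (∏ j, (if j = k then (fun y : ℝ => |y|) else (fun _ : ℝ => (1:ℝ))) (x j)) = |x k| := by
      intro x
      rw [Finset.prod_eq_single k]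
      · simp
      · intro b _ hb; simp [hb]
      · simp
    have H := aux_integrable_pi_prod (fun j => gaussianReal (m j) (σ ^ 2))
      (f := fun j => (if j = k then (fun y : ℝ => |y|) else (fun _ : ℝ => (1:ℝ))))
      (fun j => by
        by_cases hj : j = k
        · subst hj; simp only [if_pos rfl]
          exact (aux_gauss_integrable_id _ _ hv).abs
        · simp only [if_neg hj]; exact integrable_const 1)
    simp only [hprod] at H
    exact H
  have hxρ : ∀ k, Integrable (fun x : Fin d → ℝ => (h x / Z) * x k) Φ := by
    intro k
    refine ((hint_abs k).const_mul (1/Z)).mono'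
      ((hh.div_const Z).mul (measurable_pi_apply k)).aestronglyMeasurable
      (ae_of_all _ fun x => ?_)
    rw [norm_mul, Real.norm_eq_abs, Real.norm_eq_abs, abs_of_pos (hρ_pos x)]
    exact mul_le_mul_of_nonneg_right (hρ_le x) (abs_nonneg _)
  -- notation
  set S : ℝ := ∑ k, ((∫ x, x k ∂Q) - m k) ^ 2 with hS
  have hμQ : ∀ k, ∫ x, x k ∂Q = ∫ x, (h x / Z) * x k ∂Φ := fun k => hQint _
  have hsσ : (0:ℝ) < (σ:ℝ)^2 := by positivity
  have hcast : ((σ ^ 2 : ℝ≥0) : ℝ) = (σ:ℝ)^2 := by push_cast; ring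
  -- tilt coefficients
  set w : Fin d → ℝ := fun k => ((∫ x, x k ∂Q) - m k) / (σ:ℝ)^2 with hw
  set f : (Fin d → ℝ) → ℝ := fun x => ∑ k, w k * (x k - m k) with hf
  set g : (Fin d → ℝ) → ℝ := fun x => ∏ k, rexp (w k * (x k - m k)) with hg
  have hgf : ∀ x, g x = rexp (f x) := fun x => (Real.exp_sum _ _).symm
  have hg_pos : ∀ x, 0 < g x := fun x => Finset.prod_pos fun k _ => Real.exp_pos _
  have hg_int : Integrable g Φ :=
    aux_integrable_pi_prod _ fun k => aux_gauss_integrable_exp (m k) _ hv (w k)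
  have hIg : ∫ x, g x ∂Φ = rexp (S / (2 * (σ:ℝ)^2)) := by
    have hpi : ∫ x, g x ∂Φ
        = ∏ k, ∫ y, rexp (w k * (y - m k)) ∂(gaussianReal (m k) (σ ^ 2)) :=
      aux_integral_pi_prod (fun k => gaussianReal (m k) (σ ^ 2))
        (fun k y => rexp (w k * (y - m k)))
    rw [hpi,
      Finset.prod_congr rfl fun k _ => aux_gauss_integral_exp (m k) _ hv (w k),
      ← Real.exp_sum]
    congr 1
    rw [hS, Finset.sum_div]
    refine Finset.sum_congr rfl fun k _ => ?_
    rw [hcast]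
    simp only [hw]
    field_simp
  have hg_meas : Measurable g := by
    rw [hg]
    exact Finset.measurable_prod _ fun k _ =>
      Measurable.exp (by fun_prop)
  set E : ℝ := ∫ x, (h x / Z) * g x ∂Φ with hE
  have hE_int : Integrable (fun x => (h x / Z) * g x) Φ := by
    refine (hg_int.const_mul (1/Z)).mono'
      ((hh.div_const Z).mul hg_meas).aestronglyMeasurable
      (ae_of_all _ fun x => ?_)
    rw [norm_mul, Real.norm_eq_abs, Real.norm_eq_abs, abs_of_pos (hρ_pos x),
      abs_of_pos (hg_pos x)]
    exact mul_le_mul_of_nonneg_right (hρ_le x) (hg_pos x).le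
  have hE_pos : 0 < E := by
    rw [hE, integral_pos_iff_support_of_nonneg
      (fun x => (mul_pos (hρ_pos x) (hg_pos x)).le) hE_int]
    have hsupp : Function.support (fun x => (h x / Z) * g x) = Set.univ :=
      Set.eq_univ_of_forall fun x => (mul_pos (hρ_pos x) (hg_pos x)).ne'
    rw [hsupp]
    simp
  have hE_le : E ≤ (1/Z) * rexp (S / (2 * (σ:ℝ)^2)) := by
    rw [hE, ← hIg, ← integral_const_mul]
    refine integral_mono hE_int (hg_int.const_mul (1/Z)) fun x => ?_
    exact mul_le_mul_of_nonneg_right (hρ_le x) (hg_pos x).le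
  set c : ℝ := Real.log E with hc
  have hec : rexp c = E := Real.exp_log hE_pos
  have hpt : ∀ x, f x ≤ rexp (-c) * g x + (c - 1) := by
    intro x
    have he : rexp (f x - c) = rexp (-c) * g x := by
      rw [hgf x, ← Real.exp_add]; ring_nf
    have h1 := Real.add_one_le_exp (f x - c)
    rw [he] at h1
    linarith
  have hfρ_eq : (fun x => (h x / Z) * f x)
      = fun x => ∑ k, w k * ((h x / Z) * x k - m k * (h x / Z)) := by
    ext x
    simp only [hf]
    rw [Finset.mul_sum]
    refine Finset.sum_congr rfl fun k _ => ?_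
    ring
  have hfρ_int : Integrable (fun x => (h x / Z) * f x) Φ := by
    rw [hfρ_eq]
    exact integrable_finset_sum _ fun k _ =>
      (((hxρ k).sub (hint_ρ.const_mul (m k))).const_mul (w k))
  have hL : ∫ x, (h x / Z) * f x ∂Φ = ∑ k, w k * ((∫ x, x k ∂Q) - m k) := by
    have hint6 := integral_finset_sum (μ := Φ) Finset.univ
      (f := fun k (x : Fin d → ℝ) => w k * (h x / Z * x k - m k * (h x / Z)))
      (fun k _ => (((hxρ k).sub (hint_ρ.const_mul (m k))).const_mul (w k)))
    rw [hfρ_eq, hint6]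
    refine Finset.sum_congr rfl fun k _ => ?_
    rw [integral_const_mul, integral_sub (hxρ k) (hint_ρ.const_mul (m k)),
      integral_const_mul, hρ_integral, hμQ k, mul_one]
  have hR : ∫ x, (h x / Z) * (rexp (-c) * g x + (c - 1)) ∂Φ = c := by
    have expand : (fun x => (h x / Z) * (rexp (-c) * g x + (c - 1)))
        = fun x => rexp (-c) * ((h x / Z) * g x) + (c - 1) * (h x / Z) := by
      ext x; ring
    rw [expand, integral_add (hE_int.const_mul _) (hint_ρ.const_mul _),
      integral_const_mul, integral_const_mul, hρ_integral, ← hE, ← hec, ← Real.exp_add]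
    simp
  have hmain : ∑ k, w k * ((∫ x, x k ∂Q) - m k) ≤ c := by
    rw [← hL, ← hR]
    refine integral_mono hfρ_int ?_ fun x => ?_
    · have expand : (fun x => (h x / Z) * (rexp (-c) * g x + (c - 1)))
          = fun x => rexp (-c) * ((h x / Z) * g x) + (c - 1) * (h x / Z) := by
        ext x; ring
      rw [expand]
      exact (hE_int.const_mul _).add (hint_ρ.const_mul _)
    · exact mul_le_mul_of_nonneg_left (hpt x) (hρ_pos x).le
  have hsum : ∑ k, w k * ((∫ x, x k ∂Q) - m k) = S / (σ:ℝ)^2 := by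
    rw [hS, Finset.sum_div]
    refine Finset.sum_congr rfl fun k _ => ?_
    simp only [hw]
    field_simp
  have hlog : c ≤ Real.log (1/Z) + S / (2 * (σ:ℝ)^2) := by
    calc c = Real.log E := hc
      _ ≤ Real.log ((1/Z) * rexp (S / (2 * (σ:ℝ)^2))) := Real.log_le_log hE_pos hE_le
      _ = Real.log (1/Z) + S / (2 * (σ:ℝ)^2) := by
          rw [Real.log_mul (by positivity) (Real.exp_ne_zero _), Real.log_exp]
  have h1 : S / (σ:ℝ)^2 ≤ Real.log (1/Z) + S / (2 * (σ:ℝ)^2) := by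
    rw [← hsum]; exact hmain.trans hlog
  have h2 : S / (2 * (σ:ℝ)^2) ≤ Real.log (1/Z) := by
    have heq : S / (σ:ℝ)^2 = 2 * (S / (2 * (σ:ℝ)^2)) := by
      field_simp
    linarith
  rw [div_le_iff₀ (by positivity : (0:ℝ) < 2 * (σ:ℝ)^2)] at h2
  linarith
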